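/- arXiv:1102.1076 — 4 statements merged into one kernel-verified Lean document; each statement's English description precedes it below -/
import Mathlib

section
/- Every finite multiset of nonzero complex numbers can be written uniquely (up to reordering) as a disjoint union of q-segments such that every pair of these segments is in general position. -/
open scoped BigOperators
open Classical in
/-- The `q`-segment of origin `a` and length `k`: `{a, aq², …, aq^{2k-2}}`. -/
noncomputable def qSegment (q a : ℂ) (k : ℕ) : Finset ℂ :=
  (Finset.range k).image (fun j => a * q ^ (2 * j))

/-- A finite set is a `q`-segment if it is `Σ(k,a)` for some `a ≠ 0` and `k ≥ 1`. -/
def IsQSegment (q : ℂ) (s : Finset ℂ) : Prop :=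
  ∃ (a : ℂ) (k : ℕ), a ≠ 0 ∧ 1 ≤ k ∧ s = qSegment q a k

open Classical in
/-- Two `q`-segments are in special position if neither contains the other and their
union is again a `q`-segment; general position is the negation of special position. -/
def InGeneralPosition (q : ℂ) (s t : Finset ℂ) : Prop :=
  ¬ (¬ s ⊆ t ∧ ¬ t ⊆ s ∧ IsQSegment q (s ∪ t))

/-!
Index the `q`-line through `x ≠ 0` by `n ↦ x q^{2n}`, `n ∈ ℤ`; since `q` is not a root of unity
this is injective, and the `q`-segments on the line are exactly the images of integer intervals.
Pick `x ∈ m` and the maximal run `[i, j]` of the support of `m` along this line. A segment of any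
decomposition meeting the run lies inside it, and general position forces the segments covering
the run to start at `i` and to grow until one of them is the whole run. Conversely the run is in
general position with every segment supported in `m`, since a strictly larger segment containing
it would leave the support. Removing the run and inducting on `m` gives existence and uniqueness.
-/

theorem zpow_injective_of_pow_ne_one {M : Type*} [GroupWithZero M] {q : M} (hq : q ≠ 0)
    (hq' : ∀ n : ℕ, 0 < n → q ^ n ≠ 1) : Function.Injective (fun n : ℤ => q ^ n) := by
  have hu : ¬IsOfFinOrder (Units.mk0 q hq) := by
    rw [isOfFinOrder_iff_pow_eq_one]
    rintro ⟨n, hn, h⟩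
    exact hq' n hn (by simpa [Units.ext_iff] using h)
  intro a b h
  exact injective_zpow_iff_not_isOfFinOrder.2 hu (Units.ext (by simpa using h))

theorem Multiset.mem_sum_map_val {α : Type*} {T : Multiset (Finset α)} {y : α} :
    y ∈ (T.map Finset.val).sum ↔ ∃ s ∈ T, y ∈ s := by
  rw [← Multiset.join, Multiset.mem_join]
  simp

theorem Int.exists_maximal_Icc_subset {S : Set ℤ} (hS : S.Finite) (h0 : 0 ∈ S) :
    ∃ i j, i ≤ 0 ∧ 0 ≤ j ∧ Set.Icc i j ⊆ S ∧ i - 1 ∉ S ∧ j + 1 ∉ S := by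
  obtain ⟨lo, hlo⟩ := hS.bddBelow
  obtain ⟨up, hup⟩ := hS.bddAbove
  obtain ⟨i, ⟨hi0, hiS⟩, hi_least⟩ := Int.exists_least_of_bdd
    (P := fun z => z ≤ 0 ∧ Set.Icc z 0 ⊆ S) ⟨lo, fun z hz => hlo (hz.2 ⟨le_rfl, hz.1⟩)⟩
    ⟨0, le_rfl, by simpa using h0⟩
  obtain ⟨j, ⟨hj0, hjS⟩, hj_greatest⟩ := Int.exists_greatest_of_bdd
    (P := fun z => 0 ≤ z ∧ Set.Icc 0 z ⊆ S) ⟨up, fun z hz => hup (hz.2 ⟨hz.1, le_rfl⟩)⟩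
    ⟨0, le_rfl, by simpa using h0⟩
  refine ⟨i, j, hi0, hj0, fun n hn => ?_, fun hmem => ?_, fun hmem => ?_⟩
  · rcases le_total n 0 with h | h
    exacts [hiS ⟨hn.1, h⟩, hjS ⟨h, hn.2⟩]
  · have := hi_least (i - 1) ⟨by omega, fun n hn => ?_⟩
    · omega
    · rcases eq_or_lt_of_le hn.1 with h | h
      exacts [h ▸ hmem, hiS ⟨by omega, hn.2⟩]
  · have := hj_greatest (j + 1) ⟨by omega, fun n hn => ?_⟩
    · omega
    · rcases eq_or_lt_of_le hn.2 with h | h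
      exacts [h ▸ hmem, hjS ⟨hn.1, by omega⟩]

section

variable {q : ℂ}

noncomputable def qLine (q x : ℂ) (n : ℤ) : ℂ := x * q ^ (2 * n)

theorem qLine_injective (hq : q ≠ 0) (hq' : ∀ n : ℕ, 0 < n → q ^ n ≠ 1) {x : ℂ} (hx : x ≠ 0) :
    Function.Injective (qLine q x) :=
  (mul_right_injective₀ hx).comp <|
    (zpow_injective_of_pow_ne_one hq hq').comp fun _ _ h => by simpa using h

theorem qLine_zero (x : ℂ) : qLine q x 0 = x := by simp [qLine]

theorem qLine_ne_zero (hq : q ≠ 0) {x : ℂ} (hx : x ≠ 0) (n : ℤ) : qLine q x n ≠ 0 :=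
  mul_ne_zero hx (zpow_ne_zero _ hq)

theorem qLine_qLine (hq : q ≠ 0) (x : ℂ) (n t : ℤ) :
    qLine q (qLine q x n) t = qLine q x (n + t) := by
  simp only [qLine, mul_assoc, ← zpow_add₀ hq, mul_add]

noncomputable def qInterval (q x : ℂ) (i j : ℤ) : Finset ℂ :=
  (Finset.Icc i j).image (qLine q x)

theorem mem_qInterval {x y : ℂ} {i j : ℤ} :
    y ∈ qInterval q x i j ↔ ∃ n, i ≤ n ∧ n ≤ j ∧ qLine q x n = y := by
  simp [qInterval, and_assoc]

theorem qLine_mem_qInterval_iff (hq : q ≠ 0) (hq' : ∀ n : ℕ, 0 < n → q ^ n ≠ 1) {x : ℂ}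
    (hx : x ≠ 0) {i j n : ℤ} : qLine q x n ∈ qInterval q x i j ↔ i ≤ n ∧ n ≤ j := by
  simp [qInterval, (qLine_injective hq hq' hx).mem_finset_image]

theorem qInterval_qLine (hq : q ≠ 0) (x : ℂ) (n i j : ℤ) :
    qInterval q (qLine q x n) i j = qInterval q x (n + i) (n + j) := by
  ext y
  simp only [mem_qInterval, qLine_qLine hq]
  constructor
  · rintro ⟨t, h1, h2, rfl⟩
    exact ⟨n + t, by omega, by omega, rfl⟩
  · rintro ⟨t, h1, h2, rfl⟩
    exact ⟨t - n, by omega, by omega, by rw [add_sub_cancel]⟩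

theorem qInterval_mono {x : ℂ} {i j i' j' : ℤ} (hi : i' ≤ i) (hj : j ≤ j') :
    qInterval q x i j ⊆ qInterval q x i' j' :=
  Finset.image_subset_image (Finset.Icc_subset_Icc hi hj)

theorem qInterval_union_qInterval {x : ℂ} {a b c d : ℤ} (hac : a ≤ c) (hcb : c ≤ b + 1)
    (hbd : b ≤ d) : qInterval q x a b ∪ qInterval q x c d = qInterval q x a d := by
  rw [qInterval, qInterval, ← Finset.image_union]
  congr 1
  ext n
  simp only [Finset.mem_union, Finset.mem_Icc]
  omega

theorem qSegment_eq_qInterval (a : ℂ) (k : ℕ) :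
    qSegment q a k = qInterval q a 0 (k - 1) := by
  ext y
  simp only [qSegment, Finset.mem_image, Finset.mem_range, mem_qInterval, qLine]
  constructor
  · rintro ⟨n, hn, rfl⟩
    exact ⟨n, by omega, by omega, by norm_cast⟩
  · rintro ⟨n, h0, hn, rfl⟩
    lift n to ℕ using h0
    exact ⟨n, by omega, by norm_cast⟩

theorem isQSegment_qInterval (hq : q ≠ 0) {x : ℂ} (hx : x ≠ 0) {i j : ℤ} (hij : i ≤ j) :
    IsQSegment q (qInterval q x i j) := by
  refine ⟨qLine q x i, (j - i + 1).toNat, qLine_ne_zero hq hx i, by omega, ?_⟩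
  rw [qSegment_eq_qInterval, qInterval_qLine hq]
  congr 1 <;> omega

theorem IsQSegment.exists_eq_qInterval (hq : q ≠ 0) {s : Finset ℂ} (hs : IsQSegment q s)
    {y : ℂ} (hy : y ∈ s) : ∃ i j : ℤ, i ≤ 0 ∧ 0 ≤ j ∧ s = qInterval q y i j := by
  obtain ⟨a, k, -, -, rfl⟩ := hs
  rw [qSegment_eq_qInterval, mem_qInterval] at *
  obtain ⟨t, h0, hk, rfl⟩ := hy
  refine ⟨-t, k - 1 - t, by omega, by omega, ?_⟩
  rw [qInterval_qLine hq]
  congr 1 <;> omega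

theorem IsQSegment.nonempty {s : Finset ℂ} (hs : IsQSegment q s) : s.Nonempty := by
  obtain ⟨a, k, -, hk, rfl⟩ := hs
  exact ⟨a, Finset.mem_image.2 ⟨0, Finset.mem_range.2 hk, by simp⟩⟩

theorem InGeneralPosition.symm {s t : Finset ℂ} (h : InGeneralPosition q s t) :
    InGeneralPosition q t s :=
  fun ⟨hts, hst, hunion⟩ => h ⟨hst, hts, Finset.union_comm t s ▸ hunion⟩

theorem inGeneralPosition_self (s : Finset ℂ) : InGeneralPosition q s s :=
  fun h => h.1 subset_rfl

instance : Std.Symm (InGeneralPosition q) := ⟨fun _ _ => InGeneralPosition.symm⟩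

theorem not_inGeneralPosition_qInterval (hq : q ≠ 0) (hq' : ∀ n : ℕ, 0 < n → q ^ n ≠ 1)
    {x : ℂ} (hx : x ≠ 0) {a b c d : ℤ} (hac : a < c) (hcb : c ≤ b + 1) (hbd : b < d) :
    ¬InGeneralPosition q (qInterval q x a b) (qInterval q x c d) := by
  have hmem (i j n : ℤ) : qLine q x n ∈ qInterval q x i j ↔ i ≤ n ∧ n ≤ j :=
    qLine_mem_qInterval_iff hq hq' hx
  refine not_not_intro ⟨fun h => ?_, fun h => ?_, ?_⟩
  · have := (hmem _ _ _).1 (h ((hmem _ _ _).2 ⟨le_rfl, by omega⟩))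
    omega
  · have := (hmem _ _ _).1 (h ((hmem _ _ _).2 ⟨hcb, by omega⟩))
    omega
  · rw [qInterval_union_qInterval hac.le hcb hbd.le]
    exact isQSegment_qInterval hq hx (by omega)

def IsQSegmentDecomposition (q : ℂ) (m : Multiset ℂ) (S : Multiset (Finset ℂ)) : Prop :=
  (∀ s ∈ S, IsQSegment q s) ∧ (S.map Finset.val).sum = m ∧ S.Pairwise (InGeneralPosition q)

namespace IsQSegmentDecomposition

variable {m : Multiset ℂ} {S : Multiset (Finset ℂ)}

theorem mem (hS : IsQSegmentDecomposition q m S) {s : Finset ℂ} (hs : s ∈ S) {y : ℂ}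
    (hy : y ∈ s) : y ∈ m :=
  hS.2.1 ▸ Multiset.mem_sum_map_val.2 ⟨s, hs, hy⟩

theorem inGeneralPosition (hS : IsQSegmentDecomposition q m S) {s t : Finset ℂ} (hs : s ∈ S)
    (ht : t ∈ S) : InGeneralPosition q s t := by
  rcases eq_or_ne s t with rfl | hst
  · exact inGeneralPosition_self s
  · exact hS.2.2.forall hs ht hst

theorem eq_zero (hS : IsQSegmentDecomposition q 0 S) : S = 0 := by
  refine Multiset.eq_zero_of_forall_notMem fun s hs => ?_
  obtain ⟨y, hy⟩ := (hS.1 s hs).nonempty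
  exact Multiset.notMem_zero y (hS.mem hs hy)

theorem cons (hS : IsQSegmentDecomposition q m S) {I : Finset ℂ} (hI : IsQSegment q I)
    (hgen : ∀ s ∈ S, InGeneralPosition q I s) :
    IsQSegmentDecomposition q (I.val + m) (I ::ₘ S) := by
  obtain ⟨hseg, rfl, l, rfl, hl⟩ := hS
  exact ⟨Multiset.forall_mem_cons.2 ⟨hI, hseg⟩, by simp,
    I :: l, rfl, List.pairwise_cons.2 ⟨fun s hs => hgen s hs, hl⟩⟩

theorem erase (hS : IsQSegmentDecomposition q m S) {I : Finset ℂ} (hI : I ∈ S) :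
    IsQSegmentDecomposition q (m - I.val) (S.erase I) := by
  obtain ⟨hseg, hsum, l, rfl, hl⟩ := hS
  refine ⟨fun s hs => hseg s (Multiset.mem_of_mem_erase hs), ?_,
    l.erase I, Multiset.coe_erase l I, hl.sublist List.erase_sublist⟩
  rw [← hsum, ← Multiset.cons_erase hI, Multiset.erase_cons_head, Multiset.map_cons,
    Multiset.sum_cons, add_tsub_cancel_left]

end IsQSegmentDecomposition

structure IsMaximalRun (q x : ℂ) (m : Multiset ℂ) (i j : ℤ) : Prop where
  mem : ∀ n, i ≤ n → n ≤ j → qLine q x n ∈ m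
  pred_notMem : qLine q x (i - 1) ∉ m
  succ_notMem : qLine q x (j + 1) ∉ m

theorem exists_isMaximalRun (hq : q ≠ 0) (hq' : ∀ n : ℕ, 0 < n → q ^ n ≠ 1) {x : ℂ}
    (hx : x ≠ 0) {m : Multiset ℂ} (hxm : x ∈ m) :
    ∃ i j, i ≤ 0 ∧ 0 ≤ j ∧ IsMaximalRun q x m i j := by
  have hfin := m.finite_toSet.preimage (qLine_injective hq hq' hx).injOn
  obtain ⟨i, j, hi, hj, hsub, hpred, hsucc⟩ :=
    Int.exists_maximal_Icc_subset hfin (by simpa [qLine_zero] using hxm)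
  exact ⟨i, j, hi, hj, fun n h1 h2 => hsub ⟨h1, h2⟩, hpred, hsucc⟩

namespace IsMaximalRun

variable {x : ℂ} {m : Multiset ℂ} {i j : ℤ}

theorem qInterval_le (hrun : IsMaximalRun q x m i j) : (qInterval q x i j).val ≤ m := by
  refine (Multiset.le_iff_subset (qInterval q x i j).nodup).2 fun y hy => ?_
  obtain ⟨n, h1, h2, rfl⟩ := mem_qInterval.1 hy
  exact hrun.mem n h1 h2

theorem eq_qInterval_of_mem (hrun : IsMaximalRun q x m i j) (hq : q ≠ 0)
    (hq' : ∀ n : ℕ, 0 < n → q ^ n ≠ 1) (hx : x ≠ 0) {s : Finset ℂ} (hs : IsQSegment q s)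
    (hsm : ∀ y ∈ s, y ∈ m) {n : ℤ} (hin : i ≤ n) (hnj : n ≤ j) (hns : qLine q x n ∈ s) :
    ∃ a b, i ≤ a ∧ a ≤ n ∧ n ≤ b ∧ b ≤ j ∧ s = qInterval q x a b := by
  obtain ⟨a, b, ha, hb, rfl⟩ := hs.exists_eq_qInterval hq hns
  rw [qInterval_qLine hq] at hsm ⊢
  have hmem (t : ℤ) (h1 : n + a ≤ t) (h2 : t ≤ n + b) : qLine q x t ∈ m :=
    hsm _ ((qLine_mem_qInterval_iff hq hq' hx).2 ⟨h1, h2⟩)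
  have hia : i ≤ n + a := by
    by_contra
    exact hrun.pred_notMem (hmem _ (by omega) (by omega))
  have hbj : n + b ≤ j := by
    by_contra
    exact hrun.succ_notMem (hmem _ (by omega) (by omega))
  exact ⟨n + a, n + b, hia, by omega, by omega, hbj, rfl⟩

theorem inGeneralPosition (hrun : IsMaximalRun q x m i j) (hq : q ≠ 0)
    (hq' : ∀ n : ℕ, 0 < n → q ^ n ≠ 1) (hx : x ≠ 0) (hi : i ≤ 0) (hj : 0 ≤ j)
    {s : Finset ℂ} (hsm : ∀ y ∈ s, y ∈ m) : InGeneralPosition q (qInterval q x i j) s := by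
  rintro ⟨-, hsI, hunion⟩
  have hx_mem : qLine q x 0 ∈ qInterval q x i j ∪ s :=
    Finset.mem_union_left _ ((qLine_mem_qInterval_iff hq hq' hx).2 ⟨hi, hj⟩)
  have hunion_m (y : ℂ) (hy : y ∈ qInterval q x i j ∪ s) : y ∈ m :=
    (Finset.mem_union.1 hy).elim (Multiset.mem_of_le hrun.qInterval_le) (hsm y)
  obtain ⟨a, b, hia, -, -, hbj, hU⟩ :=
    hrun.eq_qInterval_of_mem hq hq' hx hunion hunion_m hi hj hx_mem
  exact hsI (Finset.subset_union_right.trans (hU ▸ qInterval_mono hia hbj))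

theorem mem_of_isQSegmentDecomposition (hrun : IsMaximalRun q x m i j) (hq : q ≠ 0)
    (hq' : ∀ n : ℕ, 0 < n → q ^ n ≠ 1) (hx : x ≠ 0) (hij : i ≤ j)
    {T : Multiset (Finset ℂ)} (hT : IsQSegmentDecomposition q m T) :
    qInterval q x i j ∈ T := by
  have cover (n : ℤ) (hin : i ≤ n) (hnj : n ≤ j) :
      ∃ a b, i ≤ a ∧ a ≤ n ∧ n ≤ b ∧ b ≤ j ∧ qInterval q x a b ∈ T := by
    obtain ⟨s, hsT, hns⟩ := Multiset.mem_sum_map_val.1 (hT.2.1 ▸ hrun.mem n hin hnj)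
    obtain ⟨a, b, h1, h2, h3, h4, rfl⟩ :=
      hrun.eq_qInterval_of_mem hq hq' hx (hT.1 s hsT) (fun _ => hT.mem hsT) hin hnj hns
    exact ⟨a, b, h1, h2, h3, h4, hsT⟩
  -- The segment covering `b + 1` must start at `i`, else it is in special position with
  -- the segment `[i, b]`.
  have grow (n : ℤ) (hin : i ≤ n) : n ≤ j → ∃ b, n ≤ b ∧ b ≤ j ∧ qInterval q x i b ∈ T := by
    induction n, hin using Int.leInduction with
    | base =>
      intro hij
      obtain ⟨a, b, h1, h2, h3, h4, habT⟩ := cover i le_rfl hij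
      exact ⟨b, h3, h4, (show a = i by omega) ▸ habT⟩
    | succ n hin ih =>
      intro hnj
      obtain ⟨b, hnb, hbj, hbT⟩ := ih (by omega)
      rcases lt_or_eq_of_le hnb with hlt | rfl
      · exact ⟨b, hlt, hbj, hbT⟩
      obtain ⟨a₁, b₁, h1, h2, h3, h4, h₁T⟩ := cover (n + 1) (by omega) hnj
      rcases eq_or_lt_of_le h1 with rfl | hlt
      · exact ⟨b₁, h3, h4, h₁T⟩
      exact absurd (hT.inGeneralPosition hbT h₁T)
        (not_inGeneralPosition_qInterval hq hq' hx hlt h2 (by omega))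
  obtain ⟨b, hjb, hbj, hbT⟩ := grow j hij le_rfl
  rwa [show b = j by omega] at hbT

theorem existsUnique_isQSegmentDecomposition (hrun : IsMaximalRun q x m i j) (hq : q ≠ 0)
    (hq' : ∀ n : ℕ, 0 < n → q ^ n ≠ 1) (hx : x ≠ 0) (hi : i ≤ 0) (hj : 0 ≤ j)
    (h : ∃! S, IsQSegmentDecomposition q (m - (qInterval q x i j).val) S) :
    ∃! S, IsQSegmentDecomposition q m S := by
  obtain ⟨S, hS, hS_unique⟩ := h
  have hIm : (qInterval q x i j).val + (m - (qInterval q x i j).val) = m :=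
    add_tsub_cancel_of_le hrun.qInterval_le
  refine ⟨qInterval q x i j ::ₘ S, hIm ▸ hS.cons (isQSegment_qInterval hq hx (by omega))
    fun s hs => hrun.inGeneralPosition hq hq' hx hi hj fun y hy => ?_, fun T hT => ?_⟩
  · exact Multiset.mem_of_le tsub_le_self (hS.mem hs hy)
  · have hIT := hrun.mem_of_isQSegmentDecomposition hq hq' hx (by omega) hT
    rw [← Multiset.cons_erase hIT, hS_unique _ (hT.erase hIT)]

end IsMaximalRun

end

/-- Every finite multiset of nonzero complex numbers can be written uniquely,
up to reordering (i.e. as a multiset of segments), as a disjoint union of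
`q`-segments which are pairwise in general position. -/
theorem multiset_unique_qsegment_decomposition
    (q : ℂ) (hq : q ≠ 0) (hq' : ∀ n : ℕ, 0 < n → q ^ n ≠ 1)
    (m : Multiset ℂ) (hm : ∀ x ∈ m, x ≠ (0 : ℂ)) :
    ∃! S : Multiset (Finset ℂ),
      (∀ s ∈ S, IsQSegment q s) ∧
      (S.map Finset.val).sum = m ∧
      S.Pairwise (InGeneralPosition q) := by
  induction m using Multiset.strongInductionOn with
  | ih m ih =>
  rcases Multiset.empty_or_exists_mem m with rfl | ⟨x, hxm⟩
  · exact ⟨0, ⟨by simp, by simp, Multiset.pairwise_zero _⟩,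
      fun _ => IsQSegmentDecomposition.eq_zero⟩
  have hx := hm x hxm
  obtain ⟨i, j, hi, hj, hrun⟩ := exists_isMaximalRun hq hq' hx hxm
  have hx_mem : x ∈ qInterval q x i j := by
    simpa [qLine_zero] using (qLine_mem_qInterval_iff hq hq' hx).2 ⟨hi, hj⟩
  have hlt : m - (qInterval q x i j).val < m := by
    conv_rhs => rw [← add_tsub_cancel_of_le hrun.qInterval_le]
    exact lt_add_of_pos_left _
      (pos_iff_ne_zero.2 (ne_of_mem_of_not_mem' hx_mem (Multiset.notMem_zero x)))
  exact hrun.existsUnique_isQSegmentDecomposition hq hq' hx hi hj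
    (ih _ hlt fun y hy => hm y (Multiset.mem_of_le tsub_le_self hy))
end

section
/- For every k ≥ 1 and a ∈ ℂ*, the Laurent polynomials χ_k(a) := ∏_{j=0}^{k-1} Y_{aq^{2j}} · ∑_{s=0}^{k} ∏_{t=s}^{k-1} A_{aq^{2t+1}}^{-1} in the variables Y_b (with A_b := Y_{bq} Y_{bq^{-1}}) satisfy the T-system relation χ_k(a)·χ_k(aq²) = χ_{k+1}(a)·χ_{k-1}(aq²) + 1, where χ_0(a) := 1. -/
open scoped BigOperators

/-- The group of Laurent monomials in variables `Y_b`, `b ∈ ℂ`. -/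
abbrev LaurentMonomials : Type := Multiplicative (ℂ →₀ ℤ)

/-- The monomial `Y_b`. -/
noncomputable def Yvar (b : ℂ) : LaurentMonomials :=
  Multiplicative.ofAdd (Finsupp.single b 1)

/-- The monomial `A_b = Y_{bq} Y_{bq⁻¹}`. -/
noncomputable def Avar (q b : ℂ) : LaurentMonomials :=
  Yvar (b * q) * Yvar (b * q⁻¹)

/-- The (q-)character `χ_k(a) = ∏_{j=0}^{k-1} Y_{aq^{2j}} · ∑_{s=0}^{k} ∏_{t=s}^{k-1}
A_{aq^{2t+1}}^{-1}` of the Kirillov-Reshetikhin module `W_{k,a}` of `U_q(L sl₂)`,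
viewed in the Laurent polynomial ring `ℤ[Y_b^{±1} : b ∈ ℂ*]`. -/
noncomputable def chiKR (q : ℂ) (k : ℕ) (a : ℂ) : MonoidAlgebra ℤ LaurentMonomials :=
  (∏ j ∈ Finset.range k,
      MonoidAlgebra.of ℤ LaurentMonomials (Yvar (a * q ^ (2 * j)))) *
  ∑ s ∈ Finset.range (k + 1), ∏ t ∈ Finset.Ico s k,
      MonoidAlgebra.of ℤ LaurentMonomials ((Avar q (a * q ^ (2 * t + 1)))⁻¹)

namespace KRaux

noncomputable def y (q a : ℂ) (j : ℕ) : MonoidAlgebra ℤ LaurentMonomials :=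
  MonoidAlgebra.of ℤ LaurentMonomials (Yvar (a * q ^ (2 * j)))

noncomputable def bb (q a : ℂ) (t : ℕ) : MonoidAlgebra ℤ LaurentMonomials :=
  MonoidAlgebra.of ℤ LaurentMonomials ((Avar q (a * q ^ (2 * t + 1)))⁻¹)

noncomputable def P (q a : ℂ) (s k : ℕ) : MonoidAlgebra ℤ LaurentMonomials :=
  ∏ t ∈ Finset.Ico s k, bb q a t

lemma Avar_eq (q : ℂ) (hq : q ≠ 0) (a : ℂ) (t : ℕ) :
    Avar q (a * q ^ (2 * t + 1)) = Yvar (a * q ^ (2 * (t + 1))) * Yvar (a * q ^ (2 * t)) := by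
  unfold Avar
  have h1 : a * q ^ (2 * t + 1) * q = a * q ^ (2 * (t + 1)) := by ring
  have h2 : a * q ^ (2 * t + 1) * q⁻¹ = a * q ^ (2 * t) := by
    field_simp
    ring
  rw [h1, h2]

lemma key (q : ℂ) (hq : q ≠ 0) (a : ℂ) (t : ℕ) :
    y q a t * y q a (t + 1) * bb q a t = 1 := by
  unfold y bb
  rw [Avar_eq q hq a t, ← map_mul, ← map_mul]
  rw [mul_inv_eq_one.mpr (mul_comm (Yvar (a * q ^ (2 * t))) (Yvar (a * q ^ (2 * (t + 1)))))]
  exact map_one _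

lemma chi_eq (q a : ℂ) (k : ℕ) :
    chiKR q k a = (∏ j ∈ Finset.range k, y q a j) *
      ∑ s ∈ Finset.range (k + 1), P q a s k := rfl

lemma chi_shift (q a : ℂ) (k : ℕ) :
    chiKR q k (a * q ^ 2) = (∏ j ∈ Finset.range k, y q a (j + 1)) *
      ∑ s ∈ Finset.range (k + 1), P q a (s + 1) (k + 1) := by
  unfold chiKR y P bb
  congr 1
  · apply Finset.prod_congr rfl
    intro j _
    have h : a * q ^ 2 * q ^ (2 * j) = a * q ^ (2 * (j + 1)) := by ring
    rw [h]
  · apply Finset.sum_congr rfl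
    intro s _
    rw [Finset.prod_Ico_eq_prod_range, Finset.prod_Ico_eq_prod_range]
    have hn : k + 1 - (s + 1) = k - s := by omega
    rw [hn]
    apply Finset.prod_congr rfl
    intro t _
    have h : a * q ^ 2 * q ^ (2 * (s + t) + 1) = a * q ^ (2 * (s + 1 + t) + 1) := by ring
    rw [h]

end KRaux


open KRaux in
/-- The T-system for `sl₂`:
`χ_k(a)·χ_k(aq²) = χ_{k+1}(a)·χ_{k-1}(aq²) + 1` for `k ≥ 1` (with `χ_0 = 1`). -/
theorem chiKR_T_system (q : ℂ) (hq : q ≠ 0) (hq' : ∀ n : ℕ, 0 < n → q ^ n ≠ 1)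
    (a : ℂ) (ha : a ≠ 0) (k : ℕ) (hk : 1 ≤ k) :
    chiKR q k a * chiKR q k (a * q ^ 2) =
      chiKR q (k + 1) a * chiKR q (k - 1) (a * q ^ 2) + 1 := by
  obtain ⟨m, rfl⟩ : ∃ m, k = m + 1 := ⟨k - 1, by omega⟩
  simp only [Nat.add_sub_cancel]
  rw [chi_eq q a (m + 1), chi_shift q a (m + 1), chi_eq q a (m + 1 + 1), chi_shift q a m]
  -- abbreviations
  set Ma := ∏ j ∈ Finset.range (m + 1), y q a j with hMa
  set Mb' := ∏ j ∈ Finset.range m, y q a (j + 1) with hMb'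
  set yk := y q a (m + 1) with hyk
  set bk := bb q a (m + 1) with hbk
  set S4 := ∑ s ∈ Finset.range (m + 1), P q a (s + 1) (m + 1) with hS4
  set P0 := P q a 0 (m + 1) with hP0
  -- the shifted Y-product
  have e4 : ∏ j ∈ Finset.range (m + 1), y q a (j + 1) = Mb' * yk := by
    rw [Finset.prod_range_succ]
  -- sum decompositions
  have e1 : ∑ s ∈ Finset.range (m + 1 + 1), P q a s (m + 1) = P0 + S4 := by
    rw [Finset.sum_range_succ']
    ring
  have hPtop : ∀ s : ℕ, s ≤ m + 1 → P q a s (m + 1 + 1) = P q a s (m + 1) * bk := by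
    intro s hs
    exact Finset.prod_Ico_succ_top hs _
  have hPempty : P q a (m + 1 + 1) (m + 1 + 1) = 1 := by
    unfold P
    rw [Finset.Ico_self, Finset.prod_empty]
  have e2 : ∑ s ∈ Finset.range (m + 1 + 1), P q a (s + 1) (m + 1 + 1) = S4 * bk + 1 := by
    rw [Finset.sum_range_succ, hPempty, hS4, Finset.sum_mul]
    congr 1
    apply Finset.sum_congr rfl
    intro s hs
    exact hPtop (s + 1) (by have := Finset.mem_range.mp hs; omega)
  have e3 : ∑ s ∈ Finset.range (m + 1 + 1 + 1), P q a s (m + 1 + 1) = (P0 + S4) * bk + 1 := by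
    rw [Finset.sum_range_succ, hPempty, ← e1, Finset.sum_mul]
    congr 1
    apply Finset.sum_congr rfl
    intro s hs
    exact hPtop s (by have := Finset.mem_range.mp hs; omega)
  have eM : Ma * (Mb' * yk) * P0 = 1 := by
    rw [← e4, hMa, hP0]
    unfold P
    rw [show Finset.Ico 0 (m + 1) = Finset.range (m + 1) by rw [Finset.range_eq_Ico]]
    rw [← Finset.prod_mul_distrib, ← Finset.prod_mul_distrib]
    rw [Finset.prod_congr rfl fun t _ => key q hq a t, Finset.prod_const_one]
  rw [e1, e2, e3, e4, Finset.prod_range_succ]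
  linear_combination eM
end

section
/- For a given I₀-graded space W with finite total dimension, there are only finitely many isomorphism classes of I₁-graded spaces V such that the pair (V, W) is l-dominant. -/
/-!
Off `Î₀` the l-dominance inequalities hold trivially because of the parity conditions, so they
may be summed over all degrees `r`. For the total dimension vectors `v` of `V` and `w` of `W`
(restricted to a window of degrees) this gives `A v ≤ w` componentwise, and positive
definiteness of the Cartan matrix `A` bounds `v`, by `c ‖v‖² ≤ vᵀ A v ≤ vᵀ w`. The window can
be chosen depending on `W` alone: at the top degree `r` of `V` the inequality at `(i, r + 1)`
forces `W_i(r + 1) ≥ V_i(r) > 0`, and symmetrically at the bottom degree.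
-/

open scoped Matrix

namespace Matrix

variable {ι : Type*} [Fintype ι]

theorem dotProduct_add_transpose_mulVec {R : Type*} [CommRing R] (A : Matrix ι ι R) (x : ι → R) :
    x ⬝ᵥ (A + Aᵀ) *ᵥ x = 2 * (x ⬝ᵥ A *ᵥ x) := by
  rw [add_mulVec, dotProduct_add, dotProduct_mulVec x Aᵀ, vecMul_transpose, dotProduct_comm,
    two_mul]

theorem continuous_dotProduct_mulVec_self (A : Matrix ι ι ℝ) :
    Continuous fun x : ι → ℝ => x ⬝ᵥ A *ᵥ x := by
  simp only [dotProduct, mulVec]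
  fun_prop

theorem dotProduct_map_ratCast_mulVec (A : Matrix ι ι ℚ) (v : ι → ℚ) :
    ((↑) ∘ v : ι → ℝ) ⬝ᵥ A.map (↑) *ᵥ ((↑) ∘ v) = ((v ⬝ᵥ A *ᵥ v : ℚ) : ℝ) := by
  rw [← eq_ratCast (Rat.castHom ℝ), RingHom.map_dotProduct]
  congr 1
  funext i
  exact (RingHom.map_mulVec (Rat.castHom ℝ) A v i).symm

theorem dotProduct_map_ratCast_mulVec_nonneg (A : Matrix ι ι ℚ) (hA : ∀ v, 0 ≤ v ⬝ᵥ A *ᵥ v)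
    (x : ι → ℝ) : 0 ≤ x ⬝ᵥ A.map (↑) *ᵥ x := by
  have hdense : DenseRange fun v : ι → ℚ => ((↑) ∘ v : ι → ℝ) :=
    DenseRange.piMap fun _ => Rat.denseRange_cast
  refine hdense.induction_on x
    (isClosed_le continuous_const (continuous_dotProduct_mulVec_self _)) fun v => ?_
  rw [dotProduct_map_ratCast_mulVec]
  exact_mod_cast hA v

theorem dotProduct_map_ratCast_mulVec_pos (A : Matrix ι ι ℚ)
    (hA : ∀ v, v ≠ 0 → 0 < v ⬝ᵥ A *ᵥ v) (x : ι → ℝ) (hx : x ≠ 0) :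
    0 < x ⬝ᵥ A.map (↑) *ᵥ x := by
  classical
  -- An isotropic real vector lies in the kernel of the positive semidefinite `A + Aᵀ`, which is
  -- therefore singular over `ℚ` as well.
  have hnonneg : ∀ y, 0 ≤ y ⬝ᵥ A.map ((↑) : ℚ → ℝ) *ᵥ y :=
    dotProduct_map_ratCast_mulVec_nonneg A fun v => by
      rcases eq_or_ne v 0 with rfl | hv
      · simp
      · exact (hA v hv).le
  refine (hnonneg x).lt_of_ne fun hx0 => ?_
  set S := A + Aᵀ
  have hSmap : S.map ((↑) : ℚ → ℝ) = A.map (↑) + (A.map (↑))ᵀ := by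
    simp [S, Matrix.map_add, Matrix.transpose_map]
  have hS : (S.map ((↑) : ℚ → ℝ)).PosSemidef := by
    refine PosSemidef.of_dotProduct_mulVec_nonneg ?_ fun y => ?_
    · rw [IsHermitian, conjTranspose_eq_transpose_of_trivial, hSmap, transpose_add,
        transpose_transpose, add_comm]
    · rw [star_trivial, hSmap, dotProduct_add_transpose_mulVec]
      exact mul_nonneg zero_le_two (hnonneg y)
  have hSx : S.map ((↑) : ℚ → ℝ) *ᵥ x = 0 := by
    rw [← hS.dotProduct_mulVec_zero_iff, star_trivial, hSmap, dotProduct_add_transpose_mulVec,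
      ← hx0, mul_zero]
  have hdet : S.det = 0 := by
    have h : ((Rat.castHom ℝ).mapMatrix S).det = 0 :=
      exists_mulVec_eq_zero_iff.mp ⟨x, hx, hSx⟩
    rwa [← RingHom.map_det, map_eq_zero] at h
  obtain ⟨v, hv, hSv⟩ := exists_mulVec_eq_zero_iff.mpr hdet
  have h2 : 2 * (v ⬝ᵥ A *ᵥ v) = 0 := by
    rw [← dotProduct_add_transpose_mulVec, hSv, dotProduct_zero]
  linarith [hA v hv]

theorem exists_pos_mul_sq_norm_le_dotProduct_mulVec (A : Matrix ι ι ℝ)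
    (hA : ∀ x, x ≠ 0 → 0 < x ⬝ᵥ A *ᵥ x) : ∃ c > 0, ∀ x, c * ‖x‖ ^ 2 ≤ x ⬝ᵥ A *ᵥ x := by
  obtain ⟨c, hc, hcle⟩ := (isCompact_sphere (0 : ι → ℝ) 1).exists_forall_le'
    (continuous_dotProduct_mulVec_self A).continuousOn
    fun y hy => hA y (by rintro rfl; simp at hy)
  refine ⟨c, hc, fun x => ?_⟩
  rcases eq_or_ne x 0 with rfl | hx
  · simp
  have hxn : 0 < ‖x‖ := norm_pos_iff.mpr hx
  have hunit := hcle (‖x‖⁻¹ • x) (by simp [norm_smul, hxn.ne'])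
  rw [mulVec_smul, dotProduct_smul, smul_dotProduct, smul_eq_mul, smul_eq_mul] at hunit
  calc c * ‖x‖ ^ 2 ≤ ‖x‖⁻¹ * (‖x‖⁻¹ * (x ⬝ᵥ A *ᵥ x)) * ‖x‖ ^ 2 := by gcongr
    _ = x ⬝ᵥ A *ᵥ x := by field_simp

theorem exists_norm_le_of_mulVec_le (A : Matrix ι ι ℝ) (hA : ∀ x, x ≠ 0 → 0 < x ⬝ᵥ A *ᵥ x)
    (w : ι → ℝ) : ∃ B, ∀ x, 0 ≤ x → A *ᵥ x ≤ w → ‖x‖ ≤ B := by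
  obtain ⟨c, hc, hcoer⟩ := exists_pos_mul_sq_norm_le_dotProduct_mulVec A hA
  refine ⟨(∑ i, |w i|) / c, fun x hx hAx => ?_⟩
  have hupper : x ⬝ᵥ A *ᵥ x ≤ ‖x‖ * ∑ i, |w i| := calc
    x ⬝ᵥ A *ᵥ x ≤ x ⬝ᵥ w := dotProduct_le_dotProduct_of_nonneg_left hAx hx
    _ ≤ ∑ i, ‖x‖ * |w i| := Finset.sum_le_sum fun i _ => by
      calc x i * w i ≤ |x i| * |w i| := by rw [← abs_mul]; exact le_abs_self _
        _ ≤ ‖x‖ * |w i| := by gcongr; exact norm_le_pi_norm x i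
    _ = ‖x‖ * ∑ i, |w i| := (Finset.mul_sum ..).symm
  rw [le_div_iff₀ hc]
  rcases (norm_nonneg x).eq_or_lt with hx0 | hxpos
  · rw [← hx0, zero_mul]
    positivity
  · nlinarith [hcoer x]

theorem exists_nat_bound_of_mulVec_le (A : Matrix ι ι ℤ)
    (hA : ∀ v : ι → ℚ, v ≠ 0 → 0 < v ⬝ᵥ A.map (↑) *ᵥ v) (w : ι → ℤ) :
    ∃ B : ℕ, ∀ v : ι → ℕ, A *ᵥ (fun i => (v i : ℤ)) ≤ w → ∀ i, v i ≤ B := by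
  have hAℝ : ∀ x : ι → ℝ, x ≠ 0 → 0 < x ⬝ᵥ A.map (↑) *ᵥ x := by
    simpa [Matrix.map_map, Function.comp_def] using dotProduct_map_ratCast_mulVec_pos _ hA
  obtain ⟨B, hB⟩ := exists_norm_le_of_mulVec_le _ hAℝ fun i => w i
  refine ⟨⌈B⌉₊, fun v hv i => ?_⟩
  have hvB := hB (fun i => (v i : ℝ)) (fun i => by positivity) fun i => by
    have h := RingHom.map_mulVec (Int.castRingHom ℝ) A (fun i => (v i : ℤ)) i
    simp only [Int.coe_castRingHom, Function.comp_def, Int.cast_natCast] at h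
    rw [← h]
    exact Int.cast_le.mpr (hv i)
  have hvi : (v i : ℝ) ≤ B := (norm_le_pi_norm (fun i => (v i : ℝ)) i).trans' (by simp) |>.trans hvB
  exact_mod_cast hvi.trans (Nat.le_ceil B)

end Matrix

theorem sum_comp_add_right_eq_of_support_subset {G M : Type*} [AddGroup G] [AddCommMonoid M]
    {g : G → M} {t : Finset G} (c : G) (hg : Function.support g ⊆ t)
    (hgc : Function.support (fun r => g (r + c)) ⊆ t) :
    ∑ r ∈ t, g (r + c) = ∑ r ∈ t, g r := by
  rw [← finsum_eq_sum_of_support_subset _ hgc, ← finsum_eq_sum_of_support_subset _ hg]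
  exact finsum_comp_equiv (Equiv.addRight c)

theorem Finsupp.le_indicator_const_of_support_subset {α : Type*} (f : α →₀ ℕ) (s : Finset α) (B : ℕ)
    (hs : f.support ⊆ s) (hB : ∀ a ∈ s, f a ≤ B) : f ≤ Finsupp.indicator s fun _ _ => B := by
  classical
  intro a
  rw [Finsupp.indicator_apply]
  split_ifs with ha
  · exact hB a ha
  · exact (Finsupp.notMem_support_iff.mp fun h => ha (hs h)).le

section LDominance

variable {I : Type*} [Fintype I] [DecidableEq I] (aC : I → I → ℤ) (W V : (I × ℤ) →₀ ℕ)

def lDefect (i : I) (r : ℤ) : ℤ :=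
  (W (i, r) : ℤ) - (V (i, r + 1) : ℤ) - (V (i, r - 1) : ℤ)
    - ∑ j ∈ Finset.univ.erase i, aC i j * (V (j, r) : ℤ)

theorem lDefect_nonneg_of_parity (ξ : I → ZMod 2)
    (hbip : ∀ i j, i ≠ j → aC i j ≠ 0 → ξ j = ξ i + 1)
    (hW : ∀ p ∈ W.support, (p.2 : ZMod 2) = ξ p.1)
    (hV : ∀ p ∈ V.support, (p.2 : ZMod 2) = ξ p.1 + 1)
    (hdom : ∀ (i : I) (r : ℤ), (r : ZMod 2) = ξ i → 0 ≤ lDefect aC W V i r) (i : I) (r : ℤ) :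
    0 ≤ lDefect aC W V i r := by
  by_cases hr : (r : ZMod 2) = ξ i
  · exact hdom i r hr
  have hW0 : W (i, r) = 0 := Finsupp.notMem_support_iff.mp fun h => hr (hW _ h)
  have hVsucc : V (i, r + 1) = 0 := Finsupp.notMem_support_iff.mp fun h => by
    have h' := hV _ h
    push_cast at h'
    exact hr (add_right_cancel h')
  have hVpred : V (i, r - 1) = 0 := Finsupp.notMem_support_iff.mp fun h => by
    have h' := hV _ h
    push_cast at h'
    rw [CharTwo.sub_eq_add] at h'
    exact hr (add_right_cancel h')
  have hadj : ∑ j ∈ Finset.univ.erase i, aC i j * (V (j, r) : ℤ) = 0 :=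
    Finset.sum_eq_zero fun j hj => by
      rcases eq_or_ne (aC i j) 0 with h0 | h0
      · rw [h0, zero_mul]
      have hVj : V (j, r) = 0 := Finsupp.notMem_support_iff.mp fun h => by
        have h' := hV _ h
        rw [hbip i j (Finset.ne_of_mem_erase hj).symm h0, CharTwo.add_cancel_right] at h'
        exact hr h'
      rw [hVj, Nat.cast_zero, mul_zero]
  simp [lDefect, hW0, hVsucc, hVpred, hadj]

variable {aC W V}

theorem apply_add_apply_le_of_lDefect_nonneg {i : I} {r : ℤ} (h : 0 ≤ lDefect aC W V i r)
    (hr : ∀ j, V (j, r) = 0) : V (i, r + 1) + V (i, r - 1) ≤ W (i, r) := by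
  simp only [lDefect, hr, Nat.cast_zero, mul_zero, Finset.sum_const_zero, sub_zero] at h
  omega

theorem snd_le_of_lDefect_nonneg (hdom : ∀ i r, 0 ≤ lDefect aC W V i r) {hi : ℤ}
    (hW : ∀ p ∈ W.support, p.2 ≤ hi) : ∀ p ∈ V.support, p.2 ≤ hi := by
  intro p hp
  obtain ⟨q, hq, hqmax⟩ := V.support.exists_max_image Prod.snd ⟨p, hp⟩
  have hle := apply_add_apply_le_of_lDefect_nonneg (hdom q.1 (q.2 + 1)) fun j =>
    Finsupp.notMem_support_iff.mp fun h => by linarith [hqmax _ h]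
  rw [add_sub_cancel_right, Prod.mk.eta] at hle
  have hWq : (q.1, q.2 + 1) ∈ W.support := by
    rw [Finsupp.mem_support_iff] at hq ⊢
    omega
  linarith [hW _ hWq, hqmax p hp]

theorem le_snd_of_lDefect_nonneg (hdom : ∀ i r, 0 ≤ lDefect aC W V i r) {lo : ℤ}
    (hW : ∀ p ∈ W.support, lo ≤ p.2) : ∀ p ∈ V.support, lo ≤ p.2 := by
  intro p hp
  obtain ⟨q, hq, hqmin⟩ := V.support.exists_min_image Prod.snd ⟨p, hp⟩
  have hle := apply_add_apply_le_of_lDefect_nonneg (hdom q.1 (q.2 - 1)) fun j =>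
    Finsupp.notMem_support_iff.mp fun h => by linarith [hqmin _ h]
  rw [sub_add_cancel, Prod.mk.eta] at hle
  have hWq : (q.1, q.2 - 1) ∈ W.support := by
    rw [Finsupp.mem_support_iff] at hq ⊢
    omega
  linarith [hW _ hWq, hqmin p hp]

theorem mulVec_sum_le_of_lDefect_nonneg (hdiag : ∀ i, aC i i = 2)
    (hdom : ∀ i r, 0 ≤ lDefect aC W V i r) {lo hi : ℤ}
    (hV : ∀ p ∈ V.support, p.2 ∈ Finset.Icc lo hi) :
    Matrix.of aC *ᵥ (fun i => ((∑ r ∈ Finset.Icc (lo - 1) (hi + 1), V (i, r) : ℕ) : ℤ))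
      ≤ fun i => ∑ r ∈ Finset.Icc (lo - 1) (hi + 1), (W (i, r) : ℤ) := by
  set t := Finset.Icc (lo - 1) (hi + 1)
  -- `t` extends the degree range of `V` by one on each side, so shifting by `±1` loses no terms.
  have hsupp : ∀ j (c : ℤ), |c| ≤ 1 → Function.support (fun r => (V (j, r + c) : ℤ)) ⊆ t := by
    intro j c hc r hr
    have hr' := hV (j, r + c) (Finsupp.mem_support_iff.mpr (by simpa using hr))
    simp only [Finset.mem_Icc, Finset.coe_Icc, Set.mem_Icc, t] at hr' ⊢
    rw [abs_le] at hc
    omega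
  have hsupp0 : ∀ j, Function.support (fun r => (V (j, r) : ℤ)) ⊆ t := fun j => by
    simpa using hsupp j 0 (by simp)
  intro i
  have hsucc : ∑ r ∈ t, (V (i, r + 1) : ℤ) = ∑ r ∈ t, (V (i, r) : ℤ) :=
    sum_comp_add_right_eq_of_support_subset 1 (hsupp0 i) (hsupp i 1 (by simp))
  have hpred : ∑ r ∈ t, (V (i, r - 1) : ℤ) = ∑ r ∈ t, (V (i, r) : ℤ) := by
    simpa only [sub_eq_add_neg] using
      sum_comp_add_right_eq_of_support_subset (-1) (hsupp0 i) (hsupp i (-1) (by simp))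
  have hadj : ∑ r ∈ t, ∑ j ∈ Finset.univ.erase i, aC i j * (V (j, r) : ℤ)
      = ∑ j ∈ Finset.univ.erase i, aC i j * ∑ r ∈ t, (V (j, r) : ℤ) := by
    rw [Finset.sum_comm]
    simp only [Finset.mul_sum]
  have h0 := Finset.sum_nonneg fun r (_ : r ∈ t) => hdom i r
  simp only [lDefect, Finset.sum_sub_distrib, hsucc, hpred, hadj] at h0
  show ∑ j, aC i j * ((∑ r ∈ t, V (j, r) : ℕ) : ℤ) ≤ _
  simp only [Nat.cast_sum]
  rw [← Finset.add_sum_erase _ _ (Finset.mem_univ i), hdiag]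
  linarith

end LDominance

/-- `W` and `V` are encoded by their dimension functions on `I × ℤ`, and `Î₀` (resp. `Î₁`) is the
set of `(i, r)` with `r ≡ ξ i` (resp. `r ≡ ξ i + 1`) mod `2`. -/
theorem finitely_many_lDominant_V_general
    {I : Type} [Fintype I] [DecidableEq I] (aC : I → I → ℤ)
    (hdiag : ∀ i, aC i i = 2)
    (hposdef : ∀ v : I → ℚ, v ≠ 0 → 0 < ∑ i, ∑ j, (aC i j : ℚ) * v i * v j)
    (ξ : I → ZMod 2)
    (hbip : ∀ i j, i ≠ j → aC i j ≠ 0 → ξ j = ξ i + 1)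
    (W : (I × ℤ) →₀ ℕ)
    (hW : ∀ p ∈ W.support, ((p.2 : ZMod 2) = ξ p.1)) :
    {V : (I × ℤ) →₀ ℕ |
        (∀ p ∈ V.support, ((p.2 : ZMod 2) = ξ p.1 + 1)) ∧
        ∀ (i : I) (r : ℤ), ((r : ZMod 2) = ξ i) →
          0 ≤ (W (i, r) : ℤ) - (V (i, r + 1) : ℤ) - (V (i, r - 1) : ℤ)
              - ∑ j ∈ Finset.univ.erase i, aC i j * (V (j, r) : ℤ)}.Finite := by
  have hpos : ∀ v : I → ℚ, v ≠ 0 → 0 < v ⬝ᵥ (Matrix.of aC).map (↑) *ᵥ v := fun v hv => by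
    convert hposdef v hv using 1
    simp only [dotProduct, Matrix.mulVec, Matrix.map_apply, Matrix.of_apply, Finset.mul_sum]
    exact Finset.sum_congr rfl fun i _ => Finset.sum_congr rfl fun j _ => by ring
  obtain ⟨lo, hlo⟩ := (W.support.image Prod.snd).bddBelow
  obtain ⟨hi, hhi⟩ := (W.support.image Prod.snd).bddAbove
  set t := Finset.Icc (lo - 1) (hi + 1)
  obtain ⟨B, hB⟩ := Matrix.exists_nat_bound_of_mulVec_le _ hpos fun i => ∑ r ∈ t, (W (i, r) : ℤ)
  refine (Set.finite_Iic (Finsupp.indicator (Finset.univ ×ˢ t) fun _ _ => B)).subset ?_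
  rintro V ⟨hVpar, hVdom⟩
  have hdom := lDefect_nonneg_of_parity aC W V ξ hbip hW hVpar hVdom
  have hdeg : ∀ p ∈ V.support, p.2 ∈ Finset.Icc lo hi := fun p hp => Finset.mem_Icc.mpr
    ⟨le_snd_of_lDefect_nonneg hdom (fun q hq => hlo (Finset.mem_image_of_mem _ hq)) p hp,
      snd_le_of_lDefect_nonneg hdom (fun q hq => hhi (Finset.mem_image_of_mem _ hq)) p hp⟩
  have hbound := hB _ (mulVec_sum_le_of_lDefect_nonneg hdiag hdom hdeg)
  refine Finsupp.le_indicator_const_of_support_subset V _ B (fun p hp => ?_) fun p hp => ?_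
  · have hp' := Finset.mem_Icc.mp (hdeg p hp)
    exact Finset.mem_product.mpr ⟨Finset.mem_univ _, Finset.mem_Icc.mpr (by omega)⟩
  · exact (Finset.single_le_sum (fun r _ => Nat.zero_le (V (p.1, r)))
      (Finset.mem_product.mp hp).2).trans (hbound p.1)

/-- For a fixed `Î₀`-graded space `W` (encoded by its dimension function, a finitely
supported function on `I × ℤ` respecting the parity `ξ`), there are only finitely many
isomorphism classes of `Î₁`-graded spaces `V` (encoded likewise, with the opposite
parity) such that the pair `(V, W)` is l-dominant, i.e.
`dim W_i(r) − dim V_i(r+1) − dim V_i(r−1) − ∑_{j≠i} a_{ij} dim V_j(r) ≥ 0`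
for all `(i,r) ∈ Î₀`.  Here `aC` is the Cartan matrix of a simply-laced simple Lie
algebra: symmetric, `2` on the diagonal, entries in `{0,-1}` off the diagonal, and
positive definite; `ξ` is a bipartition of the Dynkin diagram. -/
theorem finitely_many_lDominant_V
    {I : Type} [Fintype I] [DecidableEq I] (aC : I → I → ℤ)
    (hsym : ∀ i j, aC i j = aC j i)
    (hdiag : ∀ i, aC i i = 2)
    (hoff : ∀ i j, i ≠ j → aC i j = 0 ∨ aC i j = -1)
    (hposdef : ∀ v : I → ℚ, v ≠ 0 → 0 < ∑ i, ∑ j, (aC i j : ℚ) * v i * v j)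
    (ξ : I → ZMod 2)
    (hbip : ∀ i j, i ≠ j → aC i j ≠ 0 → ξ j = ξ i + 1)
    (W : (I × ℤ) →₀ ℕ)
    (hW : ∀ p ∈ W.support, ((p.2 : ZMod 2) = ξ p.1)) :
    {V : (I × ℤ) →₀ ℕ |
        (∀ p ∈ V.support, ((p.2 : ZMod 2) = ξ p.1 + 1)) ∧
        ∀ (i : I) (r : ℤ), ((r : ZMod 2) = ξ i) →
          0 ≤ (W (i, r) : ℤ) - (V (i, r + 1) : ℤ) - (V (i, r - 1) : ℤ)
              - ∑ j ∈ Finset.univ.erase i, aC i j * (V (j, r) : ℤ)}.Finite :=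
  finitely_many_lDominant_V_general aC hdiag hposdef ξ hbip W hW
end

section
/- In the sl₂ setting, the map [α,β] ↦ (x, E) with x = βα and E = β(V) induces a bijection between G_V-orbits of stable points of Λ•(V,W) and the set of pairs (x, E) where E ⊆ W is a graded subspace with dim E(r) = dim V(r+1) and x is a degree −2 endomorphism of W with Im x ⊆ E ⊆ Ker x. -/
open scoped BigOperators

set_option synthInstance.maxHeartbeats 1000000

namespace SL2Aux
noncomputable section

def eqv (d : ℤ → ℕ) {a b : ℤ} (h : a = b) : (Fin (d a) → ℂ) ≃ₗ[ℂ] (Fin (d b) → ℂ) := by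
  subst h; exact LinearEquiv.refl ℂ _

lemma map_eqv_fam {d : ℤ → ℕ} (E : ∀ r : ℤ, Submodule ℂ (Fin (d r) → ℂ)) {a b : ℤ}
    (h : a = b) : (E a).map (eqv d h).toLinearMap = E b := by
  subst h; exact Submodule.map_id _

lemma eqv_shift (w : ℤ → ℕ) {a b : ℤ} (h : a = b) (h' : a - 1 = b - 1) :
    eqv (fun t => w (t - 1)) h = eqv w h' := by subst h; rfl

lemma eqv_eqv {d : ℤ → ℕ} {a b : ℤ} (h : a = b) (h' : b = a) (y : Fin (d a) → ℂ) :
    eqv d h' (eqv d h y) = y := by subst h; rfl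

lemma shift_prop (P : ℤ → Prop) (s : ℤ) (h : P (s - 1 + 1)) : P s := by
  rwa [sub_add_cancel] at h

lemma comp_eqv_zero (v w : ℤ → ℕ) {m : Type} [AddCommGroup m] [Module ℂ m]
    (α : ∀ r : ℤ, (Fin (w r) → ℂ) →ₗ[ℂ] (Fin (v (r - 1)) → ℂ))
    {a b : ℤ} (h : a = b) (f : m →ₗ[ℂ] (Fin (w a) → ℂ))
    (hz : (α a).comp f = 0) : (α b).comp ((eqv w h).toLinearMap ∘ₗ f) = 0 := by
  subst h; exact hz

lemma exists_g {M N : Type} [AddCommGroup M] [AddCommGroup N] [Module ℂ M] [Module ℂ N]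
    (f f' : M →ₗ[ℂ] N) (hf : Function.Injective f) (hf' : Function.Injective f')
    (h : LinearMap.range f = LinearMap.range f') :
    ∃ g : M ≃ₗ[ℂ] M, ∀ u, f' (g u) = f u := by
  refine ⟨((LinearEquiv.ofInjective f hf).trans (LinearEquiv.ofEq _ _ h)).trans
    (LinearEquiv.ofInjective f' hf').symm, fun u => ?_⟩
  set z := (LinearEquiv.ofEq _ _ h) (LinearEquiv.ofInjective f hf u) with hz
  have h1 : f' ((LinearEquiv.ofInjective f' hf').symm z) = (z : N) := by
    conv_rhs => rw [← (LinearEquiv.ofInjective f' hf').apply_symm_apply z]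
    rw [LinearEquiv.ofInjective_apply]
  simp only [LinearEquiv.trans_apply, ← hz]
  rw [h1, hz]
  simp

variable (v w : ℤ → ℕ)

lemma E_spec (β : ∀ s : ℤ, (Fin (v s) → ℂ) →ₗ[ℂ] (Fin (w (s - 1)) → ℂ)) (r : ℤ) :
    LinearMap.range ((eqv w (show r - 1 + 1 - 1 = r - 1 by ring)).toLinearMap ∘ₗ
        β (r - 1 + 1)) = LinearMap.range (β r) := by
  rw [LinearMap.range_comp,
    ← eqv_shift w (show r - 1 + 1 = r by ring) (show r - 1 + 1 - 1 = r - 1 by ring)]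
  exact map_eqv_fam (fun t => LinearMap.range (β t)) (show r - 1 + 1 = r by ring)

def F :
    {p : (∀ r : ℤ, (Fin (w r) → ℂ) →ₗ[ℂ] (Fin (v (r - 1)) → ℂ)) ×
         (∀ s : ℤ, (Fin (v s) → ℂ) →ₗ[ℂ] (Fin (w (s - 1)) → ℂ)) //
      (∀ s : ℤ, (p.1 (s - 1)).comp (p.2 s) = 0) ∧
      (∀ s : ℤ, Function.Injective (p.2 s))} →
    {xE : (∀ r : ℤ, (Fin (w r) → ℂ) →ₗ[ℂ] (Fin (w (r - 1 - 1)) → ℂ)) ×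
          (∀ r : ℤ, Submodule ℂ (Fin (w r) → ℂ)) //
      (∀ r : ℤ, Module.finrank ℂ (xE.2 r) = v (r + 1)) ∧
      (∀ r : ℤ, LinearMap.range (xE.1 r) ≤ xE.2 (r - 1 - 1)) ∧
      (∀ r : ℤ, xE.2 r ≤ LinearMap.ker (xE.1 r))} :=
  fun p =>
    ⟨⟨fun r => (p.1.2 (r - 1)).comp (p.1.1 r),
      fun r => LinearMap.range ((eqv w (show r + 1 - 1 = r by ring)).toLinearMap ∘ₗ
        p.1.2 (r + 1))⟩,
      by
        intro r
        show Module.finrank ℂ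
          (LinearMap.range ((eqv w (show r + 1 - 1 = r by ring)).toLinearMap ∘ₗ
            p.1.2 (r + 1))) = v (r + 1)
        rw [LinearMap.range_comp, LinearEquiv.finrank_map_eq,
          LinearMap.finrank_range_of_inj (p.2.2 (r + 1)), Module.finrank_fin_fun],
      by
        intro r
        refine le_trans (LinearMap.range_comp_le_range _ _) (le_of_eq ?_)
        exact (E_spec v w p.1.2 (r - 1)).symm,
      by
        rintro r y ⟨u, rfl⟩
        have hz := comp_eqv_zero v w p.1.1 (show r + 1 - 1 = r by ring) (p.1.2 (r + 1))
          (p.2.1 (r + 1))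
        have h2 := LinearMap.congr_fun hz u
        simp only [LinearMap.mem_ker, LinearMap.comp_apply, LinearMap.zero_apply,
          LinearEquiv.coe_coe] at h2 ⊢
        rw [h2]
        exact map_zero _⟩

lemma F_surj : Function.Surjective (F v w) := by
  rintro ⟨⟨x, E⟩, hfin, hrng, hker⟩
  have he : ∀ r : ℤ, ((Fin (v (r + 1)) → ℂ) ≃ₗ[ℂ] E r) := fun r =>
    Classical.choice (FiniteDimensional.nonempty_linearEquiv_of_finrank_eq
      (by rw [Module.finrank_fin_fun]; exact (hfin r).symm))
  set β : ∀ s : ℤ, (Fin (v s) → ℂ) →ₗ[ℂ] (Fin (w (s - 1)) → ℂ) := fun s =>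
    (E (s - 1)).subtype ∘ₗ (he (s - 1)).toLinearMap ∘ₗ
      (eqv v (show s = s - 1 + 1 by ring)).toLinearMap with hβ
  set α : ∀ r : ℤ, (Fin (w r) → ℂ) →ₗ[ℂ] (Fin (v (r - 1)) → ℂ) := fun r =>
    (eqv v (show r - 1 - 1 + 1 = r - 1 by ring)).toLinearMap ∘ₗ
      (he (r - 1 - 1)).symm.toLinearMap ∘ₗ
      (x r).codRestrict (E (r - 1 - 1)) (fun c => hrng r ⟨c, rfl⟩) with hα
  have hβmem : ∀ (s : ℤ) (u), β s u ∈ E (s - 1) := fun s u => Submodule.coe_mem _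
  have hconstr : ∀ s : ℤ, (α (s - 1)).comp (β s) = 0 := by
    intro s
    refine LinearMap.ext fun u => ?_
    have h0 : x (s - 1) (β s u) = 0 := hker (s - 1) (hβmem s u)
    simp only [hα, LinearMap.comp_apply, LinearMap.zero_apply, LinearEquiv.coe_coe]
    have hcr : (x (s - 1)).codRestrict (E (s - 1 - 1 - 1))
        (fun c => hrng (s - 1) ⟨c, rfl⟩) (β s u) = 0 := by
      apply Subtype.ext; simpa using h0
    rw [hcr, map_zero, map_zero]
  have hinj : ∀ s : ℤ, Function.Injective (β s) := by
    intro s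
    simp only [hβ, LinearMap.coe_comp, LinearEquiv.coe_coe]
    exact (E (s - 1)).injective_subtype.comp
      ((he (s - 1)).injective.comp (eqv v _).injective)
  refine ⟨⟨⟨α, β⟩, hconstr, hinj⟩, ?_⟩
  apply Subtype.ext
  apply Prod.ext
  · show (fun r => (β (r - 1)).comp (α r)) = x
    funext r
    refine LinearMap.ext fun y => ?_
    simp only [hα, hβ, LinearMap.comp_apply, LinearEquiv.coe_coe]
    rw [eqv_eqv (show r - 1 - 1 + 1 = r - 1 by ring) (show r - 1 = r - 1 - 1 + 1 by ring)]
    simp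
  · show (fun r => LinearMap.range
        ((eqv w (show r + 1 - 1 = r by ring)).toLinearMap ∘ₗ β (r + 1))) = E
    funext r
    rw [LinearMap.range_comp]
    have hr : LinearMap.range (β (r + 1)) = E (r + 1 - 1) := by
      simp only [hβ]
      rw [LinearMap.range_comp, LinearMap.range_comp]
      simp [Submodule.map_top]
    rw [hr]
    exact map_eqv_fam E (show r + 1 - 1 = r by ring)

lemma F_fiber (p p' : {p : (∀ r : ℤ, (Fin (w r) → ℂ) →ₗ[ℂ] (Fin (v (r - 1)) → ℂ)) ×
         (∀ s : ℤ, (Fin (v s) → ℂ) →ₗ[ℂ] (Fin (w (s - 1)) → ℂ)) //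
      (∀ s : ℤ, (p.1 (s - 1)).comp (p.2 s) = 0) ∧
      (∀ s : ℤ, Function.Injective (p.2 s))}) :
    F v w p = F v w p' ↔
      ∃ g : ∀ s : ℤ, (Fin (v s) → ℂ) ≃ₗ[ℂ] (Fin (v s) → ℂ),
        (∀ r : ℤ, p'.1.1 r = (g (r - 1)).toLinearMap.comp (p.1.1 r)) ∧
        (∀ s : ℤ, p'.1.2 s = (p.1.2 s).comp (g s).symm.toLinearMap) := by
  obtain ⟨⟨α, β⟩, hc, hinj⟩ := p
  obtain ⟨⟨α', β'⟩, hc', hinj'⟩ := p'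
  constructor
  · intro hF
    have hval := congrArg Subtype.val hF
    have hx : ∀ r : ℤ, (β (r - 1)).comp (α r) = (β' (r - 1)).comp (α' r) :=
      fun r => congrFun (congrArg Prod.fst hval) r
    have hE : ∀ r : ℤ,
        LinearMap.range ((eqv w (show r + 1 - 1 = r by ring)).toLinearMap ∘ₗ β (r + 1)) =
        LinearMap.range ((eqv w (show r + 1 - 1 = r by ring)).toLinearMap ∘ₗ β' (r + 1)) :=
      fun r => congrFun (congrArg Prod.snd hval) r
    have hR : ∀ s : ℤ, LinearMap.range (β s) = LinearMap.range (β' s) := by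
      intro s
      have h1 := hE (s - 1)
      rw [LinearMap.range_comp, LinearMap.range_comp] at h1
      have h2 := Submodule.map_injective_of_injective
        ((eqv w (show s - 1 + 1 - 1 = s - 1 by ring)).injective) h1
      exact shift_prop
        (fun t => LinearMap.range (β t) = LinearMap.range (β' t)) s h2
    choose g hg using fun s => exists_g (β s) (β' s) (hinj s) (hinj' s) (hR s)
    refine ⟨g, ?_, ?_⟩
    · intro r
      refine LinearMap.ext fun y => ?_
      apply hinj' (r - 1)
      have h1 : β' (r - 1) (α' r y) = β (r - 1) (α r y) :=
        (LinearMap.congr_fun (hx r) y).symm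
      simp only [LinearMap.comp_apply, LinearEquiv.coe_coe]
      rw [h1, hg]
    · intro s
      refine LinearMap.ext fun u => ?_
      simp only [LinearMap.comp_apply, LinearEquiv.coe_coe]
      conv_lhs => rw [← (g s).apply_symm_apply u]
      rw [hg]
  · rintro ⟨g, hα, hβ⟩
    have hα' : ∀ r : ℤ, α' r = (g (r - 1)).toLinearMap.comp (α r) := hα
    have hβ' : ∀ s : ℤ, β' s = (β s).comp (g s).symm.toLinearMap := hβ
    apply Subtype.ext
    apply Prod.ext
    · funext r
      refine LinearMap.ext fun y => ?_
      show β (r - 1) (α r y) = β' (r - 1) (α' r y)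
      rw [LinearMap.congr_fun (hα' r) y, LinearMap.congr_fun (hβ' (r - 1)) _]
      simp
    · funext r
      show LinearMap.range ((eqv w (show r + 1 - 1 = r by ring)).toLinearMap ∘ₗ β (r + 1))
        = LinearMap.range ((eqv w (show r + 1 - 1 = r by ring)).toLinearMap ∘ₗ β' (r + 1))
      rw [hβ' (r + 1), ← LinearMap.comp_assoc]
      conv_rhs => rw [LinearMap.range_comp, LinearEquiv.range, Submodule.map_top]

end
end SL2Aux

/-- In the `sl₂` setting, the map `[α,β] ↦ (x, E)` with `x = βα` and `E = β(V)` induces a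
bijection between `G_V`-orbits of stable points of `Λ•(V,W)` and pairs `(x,E)` where
`E ⊆ W` is graded with `dim E(r) = dim V(r+1)` and `x` is a degree `−2` endomorphism of
`W` with `Im x ⊆ E ⊆ Ker x`.  Concretely: there is a map `F` from stable points to such
pairs, given by `x(r) = β(r−1)∘α(r)` and `E(r−1) = range β(r)`, which is surjective, and
two stable points have the same image under `F` if and only if they lie in the same
`G_V`-orbit. -/
theorem sl2_orbit_bijection (v w : ℤ → ℕ) :
    ∃ F : {p : (∀ r : ℤ, (Fin (w r) → ℂ) →ₗ[ℂ] (Fin (v (r - 1)) → ℂ)) ×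
               (∀ s : ℤ, (Fin (v s) → ℂ) →ₗ[ℂ] (Fin (w (s - 1)) → ℂ)) //
            (∀ s : ℤ, (p.1 (s - 1)).comp (p.2 s) = 0) ∧
            (∀ s : ℤ, Function.Injective (p.2 s))} →
          {xE : (∀ r : ℤ, (Fin (w r) → ℂ) →ₗ[ℂ] (Fin (w (r - 1 - 1)) → ℂ)) ×
                (∀ r : ℤ, Submodule ℂ (Fin (w r) → ℂ)) //
            (∀ r : ℤ, Module.finrank ℂ (xE.2 r) = v (r + 1)) ∧
            (∀ r : ℤ, LinearMap.range (xE.1 r) ≤ xE.2 (r - 1 - 1)) ∧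
            (∀ r : ℤ, xE.2 r ≤ LinearMap.ker (xE.1 r))},
      (∀ p, (∀ r : ℤ, (F p).1.1 r = (p.1.2 (r - 1)).comp (p.1.1 r)) ∧
            (∀ r : ℤ, (F p).1.2 (r - 1) = LinearMap.range (p.1.2 r))) ∧
      Function.Surjective F ∧
      (∀ p p', F p = F p' ↔
        ∃ g : ∀ s : ℤ, (Fin (v s) → ℂ) ≃ₗ[ℂ] (Fin (v s) → ℂ),
          (∀ r : ℤ, p'.1.1 r = (g (r - 1)).toLinearMap.comp (p.1.1 r)) ∧
          (∀ s : ℤ, p'.1.2 s = (p.1.2 s).comp (g s).symm.toLinearMap)) := by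
  refine ⟨SL2Aux.F v w, fun p => ⟨fun r => rfl, fun r => SL2Aux.E_spec v w p.1.2 r⟩,
    SL2Aux.F_surj v w, SL2Aux.F_fiber v w⟩
end
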